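/- For y ∈ C(P,A)_λ, the point x = ψ̃(y) satisfies all defining inequalities of O(P,A)_λ: for every p ∈ P−A and every q covered by p, x_p ≥ x_q (resp. x_p ≥ λ_q if q ∈ A), and for every a ∈ A with p < a, x_p ≤ λ_a. -/

import Mathlib

open Finset Set

section Marked

variable {P : Type*} [PartialOrder P]

/-- A marked poset: `A` contains all extremal (minimal or maximal) elements of `P`. -/
def IsMarkedPoset (A : Set P) : Prop := ∀ p : P, IsMin p ∨ IsMax p → p ∈ A

/-- The marked order polytope `O(P,A)_λ ⊆ ℝ^{P-A}`. -/
def markedOrderPolytope (A : Set P) (lam : P → ℝ) : Set ({p : P // p ∉ A} → ℝ) :=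
  {x | (∀ p q : {p : P // p ∉ A}, (p : P) < (q : P) → x p ≤ x q) ∧
       (∀ a ∈ A, ∀ p : {p : P // p ∉ A}, a < (p : P) → lam a ≤ x p) ∧
       (∀ a ∈ A, ∀ p : {p : P // p ∉ A}, (p : P) < a → x p ≤ lam a)}

/-- The marked chain polytope `C(P,A)_λ ⊆ ℝ^{P-A}`. -/
def markedChainPolytope (A : Set P) (lam : P → ℝ) : Set ({p : P // p ∉ A} → ℝ) :=
  {x | (∀ p, 0 ≤ x p) ∧
       ∀ a ∈ A, ∀ b ∈ A, ∀ (k : ℕ) (c : Fin (k + 1) → {p : P // p ∉ A}),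
         StrictMono c → a < (c 0 : P) → (c (Fin.last k) : P) < b →
         ∑ i, x (c i) ≤ lam b - lam a}

/-- The transfer map `φ̃`: `φ̃(x)_p` is the minimum of `x_p - x_q` over covers `q ⋖ p`,
where `x_q` is read as `λ_q` when `q ∈ A`. -/
noncomputable def transferMap (A : Set P) (lam : P → ℝ)
    (x : {p : P // p ∉ A} → ℝ) : {p : P // p ∉ A} → ℝ := fun p =>
  sInf ({v | ∃ q : {p : P // p ∉ A}, (q : P) ⋖ (p : P) ∧ v = x p - x q} ∪
        {v | ∃ a ∈ A, a ⋖ (p : P) ∧ v = x p - lam a})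

open scoped Classical in
/-- The map `ψ`, defined recursively going up the poset:
`ψ(y)_p = λ_p` for `p ∈ A`, and `ψ(y)_p = y_p + max {ψ(y)_q : p ≻ q}` for `p ∉ A`. -/
noncomputable def psiFull [Finite P] (A : Set P) (lam : P → ℝ)
    (y : {p : P // p ∉ A} → ℝ) : P → ℝ :=
  WellFounded.fix wellFounded_lt (fun p ih =>
    if h : p ∈ A then lam p
    else y ⟨p, h⟩ + sSup {v | ∃ q, ∃ hq : q ⋖ p, v = ih q hq.lt})

/-- `ψ̃(y)`: the restriction of `ψ(y)` to the coordinates in `P - A`. -/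
noncomputable def psiTilde [Finite P] (A : Set P) (lam : P → ℝ)
    (y : {p : P // p ∉ A} → ℝ) : {p : P // p ∉ A} → ℝ :=
  fun p => psiFull A lam y p

end Marked


variable {P : Type*} [PartialOrder P]

/-!
Monotonicity along covers is immediate from the recursion, since `y ≥ 0`. For the upper bound,
following a maximising cover at each step unwinds `ψ(y)_p` to `λ_a + y_{c₀} + ⋯ + y_{c_k}` for a
saturated chain `a ⋖ c₀ ⋖ ⋯ ⋖ c_k = p` starting at a marked element; the recursion reaches a
marked element because minimal elements are marked. If `p < b` with `b` marked, the chain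
inequality of `C(P,A)_λ` bounds this sum by `λ_b`.
-/

lemma Fin.strictMono_snoc {α : Type*} [Preorder α] {k : ℕ} {c : Fin (k + 1) → α}
    (hc : StrictMono c) {x : α} (hx : c (Fin.last k) < x) :
    StrictMono (Fin.snoc c x : Fin (k + 2) → α) := by
  rw [← Fin.insertNth_last', Fin.strictMono_insertNth_iff]
  refine ⟨hc, fun i _ => (hc.monotone (Fin.le_last i)).trans_lt hx, fun i hi => ?_⟩
  exact absurd hi (Fin.castSucc_lt_last i).not_ge

section Psi

variable [Finite P] {A : Set P} {lam : P → ℝ} {y : {p : P // p ∉ A} → ℝ} {p q : P}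

open scoped Classical in
lemma psiFull_eq :
    psiFull A lam y p = if h : p ∈ A then lam p
      else y ⟨p, h⟩ + sSup (psiFull A lam y '' {q | q ⋖ p}) := by
  rw [psiFull, WellFounded.fix_eq]
  split_ifs with h
  · rfl
  · congr 2
    ext v
    simp only [Set.mem_ofPred_eq, Set.mem_image, exists_prop]
    exact ⟨fun ⟨q, hq, hv⟩ => ⟨q, hq, hv.symm⟩, fun ⟨q, hq, hv⟩ => ⟨q, hq, hv.symm⟩⟩

lemma psiFull_of_mem (hp : p ∈ A) : psiFull A lam y p = lam p := by
  rw [psiFull_eq, dif_pos hp]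

lemma psiFull_of_notMem (hp : p ∉ A) :
    psiFull A lam y p = y ⟨p, hp⟩ + sSup (psiFull A lam y '' {q | q ⋖ p}) := by
  rw [psiFull_eq, dif_neg hp]

lemma psiFull_le_of_covBy (hp : p ∉ A) (hy : 0 ≤ y ⟨p, hp⟩) (hqp : q ⋖ p) :
    psiFull A lam y q ≤ psiFull A lam y p := by
  have hq_le_sSup : psiFull A lam y q ≤ sSup (psiFull A lam y '' {q | q ⋖ p}) :=
    le_csSup (Set.toFinite _).bddAbove ⟨q, hqp, rfl⟩
  rw [psiFull_of_notMem hp]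
  linarith

lemma exists_covBy_psiFull_eq (hmin : ∀ p, IsMin p → p ∈ A) (hp : p ∉ A) :
    ∃ q, q ⋖ p ∧ psiFull A lam y p = y ⟨p, hp⟩ + psiFull A lam y q := by
  obtain ⟨q, hqp⟩ := exists_covBy_of_wellFoundedGT (fun h => hp (hmin p h))
  have hne : (psiFull A lam y '' {q | q ⋖ p}).Nonempty := ⟨_, q, hqp, rfl⟩
  obtain ⟨r, hrp, hr⟩ := hne.csSup_mem (Set.toFinite _)
  exact ⟨r, hrp, by rw [psiFull_of_notMem hp, hr]⟩

lemma exists_chain_psiFull_eq (hmin : ∀ p, IsMin p → p ∈ A) (hp : p ∉ A) :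
    ∃ (k : ℕ) (c : Fin (k + 1) → {p : P // p ∉ A}) (a : P), a ∈ A ∧ StrictMono c ∧
      a < c 0 ∧ (c (Fin.last k) : P) = p ∧ psiFull A lam y p = lam a + ∑ i, y (c i) := by
  induction p using WellFoundedLT.induction with
  | ind p ih =>
  obtain ⟨q, hqp, hpq⟩ := exists_covBy_psiFull_eq (lam := lam) (y := y) hmin hp
  by_cases hq : q ∈ A
  · refine ⟨0, ![⟨p, hp⟩], q, hq, strictMono_vecEmpty, hqp.lt, rfl, ?_⟩
    rw [hpq, psiFull_of_mem hq, Fin.sum_univ_one, Matrix.cons_val_zero, add_comm]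
  · obtain ⟨k, c, a, ha, hc, hac, hcq, hq_sum⟩ := ih q hqp.lt hq
    refine ⟨k + 1, Fin.snoc c ⟨p, hp⟩, a, ha, Fin.strictMono_snoc hc ?_, ?_, by simp, ?_⟩
    · exact Subtype.coe_lt_coe.mp (hcq ▸ hqp.lt)
    · rwa [← Fin.castSucc_zero, Fin.snoc_castSucc]
    · simp only [Fin.sum_univ_castSucc, Fin.snoc_castSucc, Fin.snoc_last, hpq, hq_sum]
      ring

lemma psiFull_le_lam_of_lt (hmin : ∀ p, IsMin p → p ∈ A) (hy : y ∈ markedChainPolytope A lam)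
    (hp : p ∉ A) {b : P} (hb : b ∈ A) (hpb : p < b) : psiFull A lam y p ≤ lam b := by
  obtain ⟨k, c, a, ha, hc, hac, hcp, hp_sum⟩ := exists_chain_psiFull_eq (lam := lam) hmin hp
  have hchain := hy.2 a ha b hb k c hc hac (hcp ▸ hpb)
  linarith

end Psi

/-- For `y ∈ C(P,A)_λ`, the point `x = ψ̃(y)` satisfies all the defining inequalities of
the marked order polytope: it is weakly increasing along covers (with values `λ_q` at
marked covered elements), and is bounded above by `λ_a` for marked elements above. -/
theorem psiTilde_satisfies_order_inequalities [Fintype P] (A : Set P) (lam : P → ℝ)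
    (hA : IsMarkedPoset A) (y : {p : P // p ∉ A} → ℝ)
    (hy : y ∈ markedChainPolytope A lam) :
    (∀ p q : {p : P // p ∉ A}, (q : P) ⋖ (p : P) →
      psiTilde A lam y q ≤ psiTilde A lam y p) ∧
    (∀ p : {p : P // p ∉ A}, ∀ a ∈ A, a ⋖ (p : P) → lam a ≤ psiTilde A lam y p) ∧
    (∀ p : {p : P // p ∉ A}, ∀ a ∈ A, (p : P) < a → psiTilde A lam y p ≤ lam a) := by
  have hmin : ∀ p, IsMin p → p ∈ A := fun p h => hA p (Or.inl h)
  refine ⟨fun p q hqp => psiFull_le_of_covBy p.2 (hy.1 p) hqp, fun p a ha hap => ?_,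
    fun p a ha hpa => psiFull_le_lam_of_lt hmin hy p.2 ha hpa⟩
  simpa only [psiTilde, psiFull_of_mem ha] using psiFull_le_of_covBy (lam := lam) p.2 (hy.1 p) hap
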